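/- arXiv:1701.02458 — 4 statements merged into one kernel-verified Lean document; each statement's English description precedes it below -/
import Mathlib

section
/- Let K be a number field of degree n, and let L ⊆ K be a ℚ-vector subspace of K of codimension 1 containing 1. If r ∈ K is such that multiplication by r maps L into L, then r ∈ ℚ. -/
/-!
Every element of `ℚ(r)` maps `L` into `L`, so `L` is a vector space over the field `ℚ(r)`, and
so is `K`. Hence `[ℚ(r) : ℚ]` divides both `dim L = n - 1` and `dim K = n`, so it is `1`.
-/

namespace Submodule

variable {k A : Type*} [CommSemiring k] [Semiring A] [Algebra k A]

def mulStabilizer (L : Submodule k A) : Subalgebra k A where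
  carrier := {a | ∀ x ∈ L, a * x ∈ L}
  mul_mem' {a b} ha hb x hx := by rw [mul_assoc]; exact ha _ (hb x hx)
  add_mem' {a b} ha hb x hx := by rw [add_mul]; exact L.add_mem (ha x hx) (hb x hx)
  algebraMap_mem' c x hx := by rw [← Algebra.smul_def]; exact L.smul_mem c hx

theorem mulStabilizer_top : (⊤ : Submodule k A).mulStabilizer = ⊤ :=
  eq_top_iff.mpr fun _ _ _ _ ↦ mem_top

end Submodule

namespace IntermediateField

variable {k K : Type*} [Field k] [Field K] [Algebra k K]

def submoduleOfLeMulStabilizer (F : IntermediateField k K) (L : Submodule k K)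
    (hF : F.toSubalgebra ≤ L.mulStabilizer) : Submodule F K where
  carrier := L
  add_mem' := L.add_mem
  zero_mem' := L.zero_mem
  smul_mem' c _ hx := hF c.2 _ hx

theorem finrank_dvd_finrank_of_le_mulStabilizer (F : IntermediateField k K) (L : Submodule k K)
    (hF : F.toSubalgebra ≤ L.mulStabilizer) :
    Module.finrank k F ∣ Module.finrank k L :=
  ⟨_, (Module.finrank_mul_finrank k F (F.submoduleOfLeMulStabilizer L hF)).symm⟩

end IntermediateField

open IntermediateField

theorem mem_rat_of_mul_stable_hyperplane_general
    (K : Type*) [Field K] [NumberField K]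
    (L : Submodule ℚ K) (hL : Module.finrank ℚ L = Module.finrank ℚ K - 1)
    (r : K) (hr : ∀ x ∈ L, r * x ∈ L) :
    ∃ q : ℚ, r = algebraMap ℚ K q := by
  have hstab : ℚ⟮r⟯.toSubalgebra ≤ L.mulStabilizer := by
    rw [adjoin_simple_toSubalgebra_of_isAlgebraic (Algebra.IsAlgebraic.isAlgebraic (R := ℚ) r)]
    exact Algebra.adjoin_le (Set.singleton_subset_iff.mpr hr)
  have hdvdK : Module.finrank ℚ ℚ⟮r⟯ ∣ Module.finrank ℚ K := by
    simpa using ℚ⟮r⟯.finrank_dvd_finrank_of_le_mulStabilizer ⊤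
      (le_top.trans Submodule.mulStabilizer_top.ge)
  have hdvdL := ℚ⟮r⟯.finrank_dvd_finrank_of_le_mulStabilizer L hstab
  rw [hL] at hdvdL
  have hdeg : Module.finrank ℚ ℚ⟮r⟯ = 1 := Nat.eq_one_of_dvd_one <| by
    simpa [Nat.sub_sub_self Module.finrank_pos] using Nat.dvd_sub hdvdK hdvdL
  obtain ⟨q, hq⟩ := mem_bot.mp <| adjoin_simple_eq_bot_iff.mp <| finrank_eq_one_iff.mp hdeg
  exact ⟨q, hq.symm⟩

/-- If `L` is a codimension-1 `ℚ`-subspace of a number field `K`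
containing `1`, and multiplication by `r ∈ K` maps `L` into `L`, then `r ∈ ℚ`. -/
theorem mem_rat_of_mul_stable_hyperplane
    (K : Type*) [Field K] [NumberField K]
    (L : Submodule ℚ K) (hL : Module.finrank ℚ L = Module.finrank ℚ K - 1)
    (h1 : (1 : K) ∈ L) (r : K) (hr : ∀ x ∈ L, r * x ∈ L) :
    ∃ q : ℚ, r = algebraMap ℚ K q :=
  mem_rat_of_mul_stable_hyperplane_general K L hL r hr
end

section
/- Let K be a number field of degree n and let 1, v_1, ..., v_{n−1} be a ℚ-basis of K with 1 together with v_1,...,v_{n−1}. Define the (n−2)×(n−2) matrix A = (a_{ij}) where a_{ij} is the coefficient of v_{n−1} in the expansion of v_i·v_j (for 1 ≤ i,j ≤ n−2) with respect to the basis 1, v_1, ..., v_{n−1}. Then A is nondegenerate (invertible over ℚ). -/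
/-!
Let `φ` be the `v_{n-1}`-coordinate. If `c` is in the kernel of the matrix, then
`u = ∑ c_j v_{j+1}` satisfies `φ (u v_i) = 0` for every `i < n - 1`, including `v_0 = 1` because `u`
has no `v_{n-1}`-component; so multiplication by `u` preserves the hyperplane `ker φ`. Then
`ker φ` is a vector space over `ℚ(u)`, hence `[ℚ(u) : ℚ]` divides both `n - 1` and `n`. So `u ∈ ℚ`,
and since `u` has no component along `1`, `u = 0` and `c = 0`.
-/

open Module

namespace IntermediateField

variable {k K : Type*} [Field k] [Field K] [Algebra k K]

theorem finrank_dvd_of_mul_mem (F : IntermediateField k K) (W : Submodule k K)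
    (hW : ∀ z ∈ F, ∀ w ∈ W, z * w ∈ W) : finrank k F ∣ finrank k W :=
  let W' : Submodule F K := { W with smul_mem' := fun z _ hw ↦ hW z z.2 _ hw }
  ⟨finrank F W', (finrank_mul_finrank k F W').symm⟩

theorem mul_mem_of_mem_adjoin_simple [FiniteDimensional k K] {W : Submodule k K} {x : K}
    (hx : ∀ w ∈ W, x * w ∈ W) : ∀ z ∈ k⟮x⟯, ∀ w ∈ W, z * w ∈ W := by
  intro z hz
  rw [← mem_toSubalgebra,
    adjoin_simple_toSubalgebra_of_isAlgebraic (IsIntegral.of_finite k x).isAlgebraic] at hz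
  induction hz using Algebra.adjoin_induction with
  | mem y hy => rwa [Set.mem_singleton_iff.mp hy]
  | algebraMap r => intro w hw; rw [← Algebra.smul_def]; exact W.smul_mem r hw
  | add y z _ _ hy hz => intro w hw; rw [add_mul]; exact W.add_mem (hy w hw) (hz w hw)
  | mul y z _ _ hy hz => intro w hw; rw [mul_assoc]; exact hy _ (hz w hw)

theorem mem_bot_of_mul_mem_of_finrank_add_one [FiniteDimensional k K] {W : Submodule k K}
    (hW : finrank k W + 1 = finrank k K) {x : K} (hx : ∀ w ∈ W, x * w ∈ W) :
    x ∈ (⊥ : IntermediateField k K) := by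
  have hdvdW := finrank_dvd_of_mul_mem k⟮x⟯ W (mul_mem_of_mem_adjoin_simple hx)
  have hdvdK := finrank_dvd_of_mul_mem k⟮x⟯ ⊤ fun _ _ _ _ ↦ trivial
  rw [finrank_top, ← hW, Nat.dvd_add_right hdvdW, Nat.dvd_one] at hdvdK
  exact finrank_adjoin_simple_eq_one_iff.mp hdvdK

end IntermediateField

namespace Module.Basis

variable {k M ι : Type*} [Field k] [AddCommGroup M] [Module k M]

theorem ker_coord (b : Basis ι k M) (t : ι) :
    LinearMap.ker (b.coord t) = Submodule.span k (b '' {t}ᶜ) := by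
  ext y
  simp [b.mem_span_image, Set.subset_compl_singleton_iff]

theorem finrank_ker_coord_add_one [FiniteDimensional k M] (b : Basis ι k M) (t : ι) :
    finrank k (LinearMap.ker (b.coord t)) + 1 = finrank k M :=
  Module.Dual.finrank_ker_add_one_of_ne_zero fun h ↦ by
    simpa using LinearMap.congr_fun h (b t)

variable {K : Type*} [Field K] [Algebra k K]

theorem mul_mem_ker_coord (b : Basis ι k K) {t : ι} {u : K}
    (hu : ∀ i ≠ t, b.coord t (u * b i) = 0) :
    ∀ y ∈ LinearMap.ker (b.coord t), u * y ∈ LinearMap.ker (b.coord t) := by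
  rw [ker_coord]
  intro y hy
  refine (Submodule.map_span_le (LinearMap.mulLeft k u) _ _).mpr ?_ ⟨y, hy, rfl⟩
  rintro _ ⟨i, hi, rfl⟩
  exact (ker_coord b t) ▸ hu i hi

theorem mem_bot_of_coord_mul_eq_zero [Finite ι] (b : Basis ι k K) {t : ι} {u : K}
    (hu : ∀ i ≠ t, b.coord t (u * b i) = 0) : u ∈ (⊥ : IntermediateField k K) :=
  have := Module.Finite.of_basis b
  IntermediateField.mem_bot_of_mul_mem_of_finrank_add_one (finrank_ker_coord_add_one b t)
    (mul_mem_ker_coord b hu)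

theorem det_repr_mul_ne_zero [Finite ι] {ι' : Type*} [Fintype ι'] [DecidableEq ι']
    (b : Basis ι k K) {i₀ t : ι} (hb : b i₀ = 1) {e : ι' → ι} (he : Function.Injective e)
    (he₀ : ∀ j, e j ≠ i₀) (het : ∀ j, e j ≠ t) (hcover : ∀ i ≠ i₀, i ≠ t → ∃ j, e j = i) :
    (Matrix.of fun i j ↦ b.repr (b (e i) * b (e j)) t).det ≠ 0 := by
  rw [Ne, ← Matrix.exists_mulVec_eq_zero_iff]
  rintro ⟨c, hc, hMc⟩
  classical
  set u := ∑ j, c j • b (e j) with hu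
  have hu_repr : ∀ i, b.repr u i = ∑ j, if e j = i then c j else 0 := by
    intro i
    simp [hu, map_sum, Finsupp.single_apply]
  have hstab : ∀ i ≠ t, b.coord t (u * b i) = 0 := by
    intro i hit
    by_cases hi₀ : i = i₀
    · simp [hi₀, hb, hu_repr, het]
    obtain ⟨k, rfl⟩ := hcover i hi₀ hit
    have hk := congrFun hMc k
    simp only [Matrix.mulVec, dotProduct, Matrix.of_apply, Pi.zero_apply] at hk
    rw [← hk, coord_apply, hu, Finset.sum_mul, map_sum, Finsupp.finsetSum_apply]
    simp [mul_comm]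
  obtain ⟨q, hq⟩ := IntermediateField.mem_bot.mp (mem_bot_of_coord_mul_eq_zero b hstab)
  refine hc (funext fun j ↦ ?_)
  have := hu_repr (e j)
  rw [← hq, Algebra.algebraMap_eq_smul_one, ← hb] at this
  simpa [he.eq_iff, he₀ j, eq_comm] using this.symm

end Module.Basis

/-- Let `1 = b 0, v_1 = b 1, …, v_{n-1} = b (n-1)` be a `ℚ`-basis of a
number field `K` of degree `n ≥ 3`.  The `(n-2) × (n-2)` matrix whose `(i,j)` entry is the
coefficient of `v_{n-1}` in the expansion of `v_i · v_j` in this basis is nondegenerate. -/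
theorem multiplication_matrix_nondegenerate
    (K : Type*) [Field K] [NumberField K] (n : ℕ) (hn : 3 ≤ n)
    (b : Module.Basis (Fin n) ℚ K) (hb : b ⟨0, by omega⟩ = 1) :
    (Matrix.of fun i j : Fin (n - 2) =>
        b.repr (b ⟨i.val + 1, by omega⟩ * b ⟨j.val + 1, by omega⟩) ⟨n - 1, by omega⟩).det
      ≠ 0 := by
  refine b.det_repr_mul_ne_zero hb (e := fun j : Fin (n - 2) ↦ ⟨j + 1, by omega⟩)
    (fun i j h ↦ ?_) (fun j h ↦ ?_) (fun j h ↦ ?_) fun i h₀ ht ↦ ⟨⟨i - 1, ?_⟩, ?_⟩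
  all_goals simp only [Fin.ext_iff, ne_eq] at *; omega
end

section
/- Let C be a smooth, projective, geometrically irreducible curve of genus g over a finite field k, and let E be a divisor on C of degree g. Let H^0(C, 2E)^sq denote the set of nonzero global sections f of O_C(2E) such that the divisor div(f) + 2E is divisible by 2 in the group of divisors (i.e., div(f) ≡ 0 mod 2 in Div(C)/2·Div(C) after adding 2E). Then there is a surjection from the projectivization ℙH^0(C,2E)^sq onto the 2-torsion subgroup Pic^0(C)(k)[2]. -/
/-- Abstract data of a smooth, projective, geometrically irreducible curve of genus `g`
over a finite field `k`: a set of closed points, the function field `F`, the divisor map,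
the dimensions `ℓ(D)` of the Riemann–Roch spaces, and the Riemann–Roch theorem. Divisors
are finitely supported `ℤ`-valued functions on the closed points. -/
structure RRCurve (k : Type*) [Field k] [Fintype k]
    (Point : Type*) (F : Type*) [Field F] [Algebra k F] : Type _ where
  /-- the genus of the curve -/
  g : ℕ
  /-- the degree homomorphism on the group of divisors -/
  deg : (Point →₀ ℤ) →+ ℤ
  /-- every closed point has positive degree -/
  deg_single_pos : ∀ p : Point, 0 < deg (Finsupp.single p 1)
  /-- the divisor of a (nonzero) rational function -/
  divisor : F → (Point →₀ ℤ)
  divisor_mul : ∀ f h : F, f ≠ 0 → h ≠ 0 → divisor (f * h) = divisor f + divisor h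
  /-- nonzero constants have trivial divisor -/
  divisor_algebraMap : ∀ c : k, c ≠ 0 → divisor (algebraMap k F c) = 0
  /-- principal divisors have degree zero -/
  deg_divisor : ∀ f : F, f ≠ 0 → deg (divisor f) = 0
  /-- `ell D` is the `k`-dimension of the Riemann–Roch space `L(D)` -/
  ell : (Point →₀ ℤ) → ℕ
  /-- the Riemann–Roch space `L(D) = {f : f = 0 ∨ div f + D ≥ 0}` has `|k| ^ ℓ(D)` elements -/
  card_RRspace : ∀ D : Point →₀ ℤ,
    Nat.card {f : F // f ≠ 0 → ∀ p, 0 ≤ divisor f p + D p} = Fintype.card k ^ ell D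
  /-- `ℓ(D)` depends only on the linear equivalence class of `D` -/
  ell_congr : ∀ D D' : Point →₀ ℤ, (∃ f : F, f ≠ 0 ∧ D - D' = divisor f) → ell D = ell D'
  /-- the Riemann–Roch inequality -/
  riemannRoch_le : ∀ D : Point →₀ ℤ, deg D + 1 - g ≤ ell D
  /-- Riemann–Roch in the range where `h¹` vanishes -/
  riemannRoch_eq : ∀ D : Point →₀ ℤ, 2 * (g : ℤ) - 2 < deg D → (ell D : ℤ) = deg D + 1 - g

/-- The subgroup of principal divisors. -/
noncomputable def RRCurve.principal {k : Type*} [Field k] [Fintype k] {Point F : Type*} [Field F]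
    [Algebra k F] (C : RRCurve k Point F) : AddSubgroup (Point →₀ ℤ) :=
  AddSubgroup.closure {D | ∃ f : F, f ≠ 0 ∧ C.divisor f = D}

/-- The 2-torsion of `Pic⁰(C)(k)`: classes in the divisor class group `Div / Prin` that are
represented by a degree-0 divisor and are killed by 2. -/
def RRCurve.picZeroTwoTorsion {k : Type*} [Field k] [Fintype k] {Point F : Type*} [Field F]
    [Algebra k F] (C : RRCurve k Point F) : Set ((Point →₀ ℤ) ⧸ C.principal) :=
  {x | (∃ D : Point →₀ ℤ, C.deg D = 0 ∧ QuotientAddGroup.mk D = x) ∧ 2 • x = 0}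

namespace RRCurve

variable {k : Type*} [Field k] [Fintype k] {Point F : Type*} [Field F] [Algebra k F]
  (C : RRCurve k Point F)

lemma divisor_one : C.divisor 1 = 0 := by
  simpa using C.divisor_algebraMap 1 one_ne_zero

lemma divisor_inv {f : F} (hf : f ≠ 0) : C.divisor f⁻¹ = -C.divisor f := by
  have h := C.divisor_mul f f⁻¹ hf (inv_ne_zero hf)
  rw [mul_inv_cancel₀ hf, C.divisor_one] at h
  exact eq_neg_of_add_eq_zero_right h.symm

lemma divisor_algebraMap_mul {c : k} (hc : c ≠ 0) {f : F} (hf : f ≠ 0) :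
    C.divisor (algebraMap k F c * f) = C.divisor f := by
  have hc' : algebraMap k F c ≠ 0 := (map_ne_zero _).mpr hc
  rw [C.divisor_mul _ _ hc' hf, C.divisor_algebraMap c hc, zero_add]

lemma mem_principal_iff {D : Point →₀ ℤ} :
    D ∈ C.principal ↔ ∃ f : F, f ≠ 0 ∧ C.divisor f = D := by
  refine ⟨fun h => ?_, fun h => AddSubgroup.subset_closure h⟩
  induction h using AddSubgroup.closure_induction with
  | mem _ hx => exact hx
  | zero => exact ⟨1, one_ne_zero, C.divisor_one⟩
  | add _ _ _ _ hx hy =>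
    obtain ⟨f, hf, rfl⟩ := hx
    obtain ⟨h, hh, rfl⟩ := hy
    exact ⟨f * h, mul_ne_zero hf hh, C.divisor_mul f h hf hh⟩
  | neg _ _ hx =>
    obtain ⟨f, hf, rfl⟩ := hx
    exact ⟨f⁻¹, inv_ne_zero hf, C.divisor_inv hf⟩

lemma mk_mem_picZeroTwoTorsion {D : Point →₀ ℤ} (hD : C.deg D = 0)
    (h2D : 2 • D ∈ C.principal) :
    (QuotientAddGroup.mk D : (Point →₀ ℤ) ⧸ C.principal) ∈ C.picZeroTwoTorsion :=
  ⟨⟨D, hD, rfl⟩, by rwa [← QuotientAddGroup.mk_nsmul, QuotientAddGroup.eq_zero_iff]⟩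

lemma exists_of_mem_picZeroTwoTorsion {x : (Point →₀ ℤ) ⧸ C.principal}
    (hx : x ∈ C.picZeroTwoTorsion) :
    ∃ D : Point →₀ ℤ, C.deg D = 0 ∧ 2 • D ∈ C.principal ∧ QuotientAddGroup.mk D = x := by
  obtain ⟨⟨D, hD, rfl⟩, h2D⟩ := hx
  exact ⟨D, hD, by rwa [← QuotientAddGroup.mk_nsmul, QuotientAddGroup.eq_zero_iff] at h2D, rfl⟩

lemma exists_ne_zero_of_one_le_ell {D : Point →₀ ℤ} (hD : 1 ≤ C.ell D) :
    ∃ f : F, f ≠ 0 ∧ ∀ p, 0 ≤ C.divisor f p + D p := by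
  have hcard : 1 < Nat.card {f : F // f ≠ 0 → ∀ p, 0 ≤ C.divisor f p + D p} := by
    rw [C.card_RRspace D]
    exact Nat.one_lt_pow (by omega) Fintype.one_lt_card
  have : Finite {f : F // f ≠ 0 → ∀ p, 0 ≤ C.divisor f p + D p} :=
    Nat.finite_of_card_ne_zero (by omega)
  have := Finite.one_lt_card_iff_nontrivial.mp hcard
  obtain ⟨f, hf⟩ := exists_ne (⟨0, fun h => absurd rfl h⟩ :
    {f : F // f ≠ 0 → ∀ p, 0 ≤ C.divisor f p + D p})
  have hf0 : (f : F) ≠ 0 := fun h => hf (Subtype.ext h)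
  exact ⟨f, hf0, f.2 hf0⟩

lemma one_le_ell_of_deg_eq_genus {D : Point →₀ ℤ} (hD : C.deg D = C.g) : 1 ≤ C.ell D := by
  have := C.riemannRoch_le D
  omega

variable (E : Point →₀ ℤ)

/-- `H⁰(C, 2E)^sq`; its projectivization is modelled by maps out of it that are invariant under
scaling by `kˣ`. -/
abbrev SquareSection : Type _ :=
  {f : F // f ≠ 0 ∧ (∀ p, 0 ≤ C.divisor f p + (2 • E) p) ∧
    ∃ Dplus : Point →₀ ℤ, C.divisor f + 2 • E = 2 • Dplus}

variable {C E}

/-- The divisor `D₊` with `div f + 2E = 2 D₊`. -/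
noncomputable def SquareSection.halfDivisor (f : C.SquareSection E) : Point →₀ ℤ :=
  f.2.2.2.choose

lemma SquareSection.divisor_add_two_nsmul (f : C.SquareSection E) :
    C.divisor f + 2 • E = 2 • f.halfDivisor :=
  f.2.2.2.choose_spec

lemma SquareSection.halfDivisor_eq {f : C.SquareSection E} {D : Point →₀ ℤ}
    (h : C.divisor f + 2 • E = 2 • D) : f.halfDivisor = D :=
  IsAddTorsionFree.nsmul_right_injective two_ne_zero (f.divisor_add_two_nsmul.symm.trans h)

lemma SquareSection.deg_halfDivisor (f : C.SquareSection E) : C.deg f.halfDivisor = C.deg E := by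
  have h := congrArg C.deg f.divisor_add_two_nsmul
  simp only [map_add, map_nsmul, C.deg_divisor _ f.2.1, zero_add] at h
  exact (IsAddTorsionFree.nsmul_right_injective two_ne_zero h).symm

lemma SquareSection.two_nsmul_sub_halfDivisor (f : C.SquareSection E) :
    2 • (E - f.halfDivisor) = C.divisor (f : F)⁻¹ := by
  rw [C.divisor_inv f.2.1, smul_sub, ← f.divisor_add_two_nsmul]
  abel

noncomputable def SquareSection.toPicZeroTwoTorsion (f : C.SquareSection E) :
    C.picZeroTwoTorsion :=
  ⟨QuotientAddGroup.mk (E - f.halfDivisor),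
    C.mk_mem_picZeroTwoTorsion (by rw [map_sub, f.deg_halfDivisor, sub_self])
      (C.mem_principal_iff.mpr ⟨_, inv_ne_zero f.2.1, f.two_nsmul_sub_halfDivisor.symm⟩)⟩

lemma SquareSection.toPicZeroTwoTorsion_eq_of_eq_algebraMap_mul {f₁ f₂ : C.SquareSection E}
    {c : k} (hc : c ≠ 0) (h : (f₂ : F) = algebraMap k F c * f₁) :
    f₁.toPicZeroTwoTorsion = f₂.toPicZeroTwoTorsion := by
  have hdiv : C.divisor (f₂ : F) = C.divisor f₁ := by
    rw [h, C.divisor_algebraMap_mul hc f₁.2.1]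
  have : f₂.halfDivisor = f₁.halfDivisor :=
    SquareSection.halfDivisor_eq (hdiv ▸ f₁.divisor_add_two_nsmul)
  simp only [SquareSection.toPicZeroTwoTorsion, this]

/-- For `2D = div h` of degree `0`, pick `u ∈ L(E - D)` (nonzero since `deg (E - D) = g`);
then `f = u² / h` has `div f + 2E = 2 (div u + E - D)` and `E - D₊ = D - div u`. -/
lemma SquareSection.exists_toPicZeroTwoTorsion_eq (hE : C.deg E = C.g) {D : Point →₀ ℤ}
    (hD : C.deg D = 0) (h2D : 2 • D ∈ C.principal) :
    ∃ f : C.SquareSection E,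
      (f.toPicZeroTwoTorsion : (Point →₀ ℤ) ⧸ C.principal) = QuotientAddGroup.mk D := by
  obtain ⟨h, hh, hhD⟩ := C.mem_principal_iff.mp h2D
  obtain ⟨u, hu, huD⟩ := C.exists_ne_zero_of_one_le_ell
    (C.one_le_ell_of_deg_eq_genus (D := E - D) (by rw [map_sub, hE, hD, sub_zero]))
  have hf : u * u * h⁻¹ ≠ 0 := mul_ne_zero (mul_ne_zero hu hu) (inv_ne_zero hh)
  have hdiv : C.divisor (u * u * h⁻¹) + 2 • E = 2 • (C.divisor u + (E - D)) := by
    rw [C.divisor_mul _ _ (mul_ne_zero hu hu) (inv_ne_zero hh), C.divisor_mul u u hu hu,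
      C.divisor_inv hh, hhD]
    abel
  have heff : ∀ p, 0 ≤ C.divisor (u * u * h⁻¹) p + (2 • E) p := by
    intro p
    have hp := congrArg (· p) hdiv
    have hup := huD p
    simp only [Finsupp.add_apply, Finsupp.smul_apply, Finsupp.sub_apply,
      nsmul_eq_mul, Nat.cast_ofNat] at hp hup ⊢
    omega
  refine ⟨⟨u * u * h⁻¹, hf, heff, _, hdiv⟩, ?_⟩
  show QuotientAddGroup.mk (E - halfDivisor _) = _
  rw [halfDivisor_eq hdiv, QuotientAddGroup.eq, C.mem_principal_iff]
  exact ⟨u, hu, by abel⟩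

lemma SquareSection.toPicZeroTwoTorsion_surjective (hE : C.deg E = C.g) :
    Function.Surjective (toPicZeroTwoTorsion : C.SquareSection E → C.picZeroTwoTorsion) := by
  rintro ⟨x, hx⟩
  obtain ⟨D, hD, h2D, rfl⟩ := C.exists_of_mem_picZeroTwoTorsion hx
  obtain ⟨f, hf⟩ := exists_toPicZeroTwoTorsion_eq hE hD h2D
  exact ⟨f, Subtype.ext hf⟩

end RRCurve

/-- Let `E` be a divisor of degree `g`.  Among the nonzero global sections
of `O_C(2E)`, consider those `f` for which `div f + 2E` is divisible by 2 in the divisor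
group.  Then there is a surjection from the projectivization of this set of sections onto
`Pic⁰(C)(k)[2]`, i.e. a surjective map defined on the sections which is invariant under
scaling by nonzero constants in `k`. -/
theorem surjection_from_projective_square_sections
    (k : Type*) [Field k] [Fintype k] (Point F : Type*) [Field F] [Algebra k F]
    (C : RRCurve k Point F) (E : Point →₀ ℤ) (hE : C.deg E = C.g) :
    ∃ φ : {f : F // f ≠ 0 ∧ (∀ p, 0 ≤ C.divisor f p + (2 • E) p) ∧
            ∃ Dplus : Point →₀ ℤ, C.divisor f + 2 • E = 2 • Dplus} →
          C.picZeroTwoTorsion,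
      Function.Surjective φ ∧
      ∀ (f₁ f₂ : {f : F // f ≠ 0 ∧ (∀ p, 0 ≤ C.divisor f p + (2 • E) p) ∧
            ∃ Dplus : Point →₀ ℤ, C.divisor f + 2 • E = 2 • Dplus}) (c : k),
        c ≠ 0 → (f₂ : F) = algebraMap k F c * (f₁ : F) → φ f₁ = φ f₂ :=
  ⟨RRCurve.SquareSection.toPicZeroTwoTorsion,
    RRCurve.SquareSection.toPicZeroTwoTorsion_surjective hE,
    fun _ _ _ hc h => RRCurve.SquareSection.toPicZeroTwoTorsion_eq_of_eq_algebraMap_mul hc h⟩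
end

section
/- Let K be a number field of degree n with no index-2 subfield, and suppose every proper subfield F ⊊ K with β ∈ F forces [K:F] ≥ 4. Then for any fixed proper subfield F of K with [K:F] = d ≥ 4, the number of β ∈ O_F with |σ(β)| ≤ C·|Disc(K)|^(1/n) for all embeddings σ of F is at most C'(n)·|Disc(K)|^(1/d) ≤ C'(n)·|Disc(K)|^(1/4). -/
open NumberField

/-!
A nonzero algebraic integer has a conjugate of absolute value at least `1` (its norm is a nonzero
integer), so for each such conjugate `z` one of `z.re + z.im`, `z.re - z.im` has absolute value at
least `1`; the latter is `re + im` of the complex-conjugate embedding. Hence an integer `β` of `F`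
is determined by the floors of `re + im` of `2σβ` over the `m = [F : ℚ]` embeddings `σ`, and when
all `|σβ| ≤ B` there are at most `(4B + 3)^m` of them. With `B ≍ |Disc K|^(1/n)` and `n = m d`
this is `≪ |Disc K|^(1/d)`.
-/

theorem Nat.card_le_of_forall_abs_le_of_one_le_abs_sub {S ι : Type*} [Fintype ι]
    (f : S → ι → ℝ) (B : ℝ) (hbound : ∀ s i, |f s i| ≤ B)
    (hsep : ∀ s t, s ≠ t → ∃ i, 1 ≤ |f s i - f t i|) :
    Nat.card S ≤ (2 * ⌈B⌉₊ + 1) ^ Fintype.card ι := by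
  classical
  set N : ℤ := (⌈B⌉₊ : ℤ)
  have hfloor_mem : ∀ s i, ⌊f s i⌋ ∈ Finset.Icc (-N) N := fun s i => by
    obtain ⟨hlo, hhi⟩ := abs_le.mp (hbound s i)
    have hBN : B ≤ N := by simpa [N] using Nat.le_ceil B
    refine Finset.mem_Icc.mpr ⟨Int.le_floor.mpr ?_, Int.floor_le_iff.mpr ?_⟩ <;> push_cast <;> linarith
  let g : S → Fintype.piFinset fun _ : ι => Finset.Icc (-N) N :=
    fun s => ⟨fun i => ⌊f s i⌋, Fintype.mem_piFinset.mpr (hfloor_mem s)⟩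
  have hg : Function.Injective g := fun s t hst => by
    by_contra hne
    obtain ⟨i, hi⟩ := hsep s t hne
    have hfl : ⌊f s i⌋ = ⌊f t i⌋ := congrFun (congrArg Subtype.val hst) i
    have := Int.abs_sub_lt_one_of_floor_eq_floor hfl
    linarith
  calc Nat.card S ≤ Nat.card (Fintype.piFinset fun _ : ι => Finset.Icc (-N) N) :=
        Nat.card_le_card_of_injective g hg
    _ = (2 * ⌈B⌉₊ + 1) ^ Fintype.card ι := by
        rw [Nat.card_eq_fintype_card, Fintype.card_coe, Fintype.card_piFinset, Finset.prod_const,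
          Int.card_Icc, Finset.card_univ]
        congr 1
        omega

theorem Complex.one_le_abs_re_add_im_or_abs_re_sub_im {z : ℂ} (hz : 1 ≤ ‖z‖) :
    1 ≤ |z.re + z.im| ∨ 1 ≤ |z.re - z.im| := by
  by_contra! h
  have hsq : ‖z‖ ^ 2 = z.re ^ 2 + z.im ^ 2 := by
    rw [Complex.sq_norm, Complex.normSq_apply]; ring
  nlinarith [abs_lt.mp h.1, abs_lt.mp h.2]

namespace NumberField

variable {K : Type*} [Field K] [NumberField K]

theorem exists_one_le_norm_embedding {x : 𝓞 K} (hx : x ≠ 0) :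
    ∃ σ : K →+* ℂ, 1 ≤ ‖σ x‖ := by
  obtain ⟨w⟩ := (inferInstance : Nonempty (InfinitePlace K))
  by_contra! h
  have hlt : ∀ z : InfinitePlace K, z x < 1 := fun z => z.norm_embedding_eq (x : K) ▸ h _
  exact (hlt w).not_ge (InfinitePlace.one_le_of_lt_one hx fun z _ => hlt z)

theorem exists_one_le_abs_re_add_im {x : 𝓞 K} (hx : x ≠ 0) :
    ∃ σ : K →+* ℂ, 1 ≤ |(σ x).re + (σ x).im| := by
  obtain ⟨σ, hσ⟩ := exists_one_le_norm_embedding hx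
  rcases Complex.one_le_abs_re_add_im_or_abs_re_sub_im hσ with h | h
  · exact ⟨σ, h⟩
  · refine ⟨ComplexEmbedding.conjugate σ, ?_⟩
    simpa [ComplexEmbedding.conjugate_coe_eq, sub_eq_add_neg] using h

theorem card_integers_forall_norm_embedding_le (B : ℝ) :
    Nat.card {x : 𝓞 K // ∀ σ : K →+* ℂ, ‖σ x‖ ≤ B}
      ≤ (2 * ⌈2 * B⌉₊ + 1) ^ Module.finrank ℚ K := by
  rw [← Embeddings.card K ℂ]
  refine Nat.card_le_of_forall_abs_le_of_one_le_abs_sub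
    (fun x σ => (σ (x.1 : K)).re + (σ (x.1 : K)).im) (2 * B) (fun x σ => ?_) fun x y hxy => ?_
  · have := x.2 σ
    linarith [abs_add_le (σ (x.1 : K)).re (σ (x.1 : K)).im,
      Complex.abs_re_le_norm (σ (x.1 : K)), Complex.abs_im_le_norm (σ (x.1 : K))]
  · obtain ⟨σ, hσ⟩ := exists_one_le_abs_re_add_im (sub_ne_zero.mpr (Subtype.coe_ne_coe.mpr hxy))
    exact ⟨σ, by simpa [sub_add_sub_comm] using hσ⟩

end NumberField

theorem Real.rpow_one_div_pow_of_eq_mul {x : ℝ} (hx : 0 ≤ x) {n m d : ℕ} (hn : n = m * d)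
    (hm : m ≠ 0) : (x ^ ((1 : ℝ) / n)) ^ m = x ^ ((1 : ℝ) / d) := by
  rw [← Real.rpow_natCast, ← Real.rpow_mul hx, hn]
  congr 1
  push_cast
  field_simp

theorem count_integers_of_subfield_in_box_general (n : ℕ) (C : ℝ) (hC : 0 < C) :
    ∃ C' : ℝ, 0 < C' ∧
      ∀ (F K : Type) [Field F] [NumberField F] [Field K] [NumberField K] [Algebra F K],
        Module.finrank ℚ K = n →
        (∀ L : IntermediateField ℚ K, Module.finrank L K ≠ 2) →
        ∀ d : ℕ, Module.finrank F K = d → 4 ≤ d →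
          (Nat.card {β : 𝓞 F //
              ∀ σ : F →+* ℂ, ‖σ (β : F)‖ ≤ C * (|discr K| : ℝ) ^ ((1 : ℝ) / n)} : ℝ)
            ≤ C' * (|discr K| : ℝ) ^ ((1 : ℝ) / d) ∧
          C' * (|discr K| : ℝ) ^ ((1 : ℝ) / d) ≤ C' * (|discr K| : ℝ) ^ ((1 : ℝ) / 4) := by
  refine ⟨(4 * C + 3) ^ n, by positivity, fun F K _ _ _ _ _ hKn _ d hd hd4 => ?_⟩
  set D : ℝ := |discr K|
  have hD : 1 ≤ D := by
    simp only [D, ← Int.cast_abs]; exact_mod_cast Int.one_le_abs (discr_ne_zero K)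
  set t := D ^ ((1 : ℝ) / n)
  have ht : 1 ≤ t := Real.one_le_rpow hD (by positivity)
  set m := Module.finrank ℚ F
  have hmd : n = m * d := by rw [← hKn, ← hd, Module.finrank_mul_finrank]
  have hceil : (2 * ⌈2 * (C * t)⌉₊ + 1 : ℝ) ≤ (4 * C + 3) * t := by
    have := Nat.ceil_lt_add_one (by positivity : 0 ≤ 2 * (C * t))
    nlinarith
  refine ⟨?_, by gcongr; exact_mod_cast hd4⟩
  calc (Nat.card {β : 𝓞 F // ∀ σ : F →+* ℂ, ‖σ (β : F)‖ ≤ C * t} : ℝ)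
      ≤ (2 * ⌈2 * (C * t)⌉₊ + 1 : ℝ) ^ m := by
        exact_mod_cast card_integers_forall_norm_embedding_le (C * t)
    _ ≤ (4 * C + 3) ^ m * t ^ m := by rw [← mul_pow]; gcongr
    _ ≤ (4 * C + 3) ^ n * D ^ ((1 : ℝ) / d) := by
        rw [Real.rpow_one_div_pow_of_eq_mul (by positivity) hmd Module.finrank_pos.ne']
        gcongr
        · linarith
        · exact hmd ▸ Nat.le_mul_of_pos_right m (by omega)

/-- Let `K` be a degree-`n` number field with no index-2 subfield, and let
`F ⊆ K` be a proper subfield with `[K : F] = d ≥ 4`.  The number of `β ∈ 𝓞 F` all of whose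
archimedean embeddings have absolute value at most `C·|Disc K|^(1/n)` is at most
`C'(n) · |Disc K|^(1/d) ≤ C'(n) · |Disc K|^(1/4)`. -/
theorem count_integers_of_subfield_in_box (n : ℕ) (hn : 0 < n) (C : ℝ) (hC : 0 < C) :
    ∃ C' : ℝ, 0 < C' ∧
      ∀ (F K : Type) [Field F] [NumberField F] [Field K] [NumberField K] [Algebra F K],
        Module.finrank ℚ K = n →
        (∀ L : IntermediateField ℚ K, Module.finrank L K ≠ 2) →
        ∀ d : ℕ, Module.finrank F K = d → 4 ≤ d →
          (Nat.card {β : 𝓞 F //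
              ∀ σ : F →+* ℂ, ‖σ (β : F)‖ ≤ C * (|discr K| : ℝ) ^ ((1 : ℝ) / n)} : ℝ)
            ≤ C' * (|discr K| : ℝ) ^ ((1 : ℝ) / d) ∧
          C' * (|discr K| : ℝ) ^ ((1 : ℝ) / d) ≤ C' * (|discr K| : ℝ) ^ ((1 : ℝ) / 4) :=
  count_integers_of_subfield_in_box_general n C hC
end
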